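/- Let K : (0,1) → ℝ⁺ be continuous, square integrable with respect to Lebesgue measure on (0,1), and expressible as the difference of two monotone increasing functions. Let x_1, x_2, … be i.i.d. real random variables with continuous cumulative distribution function P_X, let r_l^{(L)} denote the rank of x_l among x_1, …, x_L, and set u_l = P_X(x_l) (so u_l is uniformly distributed on (0,1)). Then for each fixed index l, K(r_l^{(L)}/(L+1)) − K(u_l) converges to 0 in probability as L → ∞. -/

import Mathlib

/-!
Write `F` for the cdf of the common law `ν`. Then
`(L + 1) (r_l / (L + 1) - F(x_l)) = ∑_{j < L} (𝟙{x_j ≤ x_l} - F(x_l)) - F(x_l)`.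
Every summand has mean zero in `x_j` for fixed `x_l`, and for `j ≠ k` one of `x_j, x_k` is
independent of the other two variables involved, so distinct summands are orthogonal in `L²(P)`.
Hence the sum has second moment at most `L`, and `r_l / (L + 1) → F(x_l)` in `L²`, so in
probability. As `F` is continuous, `F(x_l) ∈ (0, 1)` almost surely, where `K` is continuous, and
the continuous mapping theorem (through almost surely convergent subsequences) carries the
convergence over to `K`.
-/

open MeasureTheory ProbabilityTheory Filter Topology Set

namespace MeasureTheory

variable {α : Type*} [MeasurableSpace α] {μ : Measure α} [IsFiniteMeasure μ]

lemma integrable_sq_of_abs_le {f : α → ℝ} (hf : AEStronglyMeasurable f μ) {C : ℝ}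
    (hC : ∀ ω, |f ω| ≤ C) : Integrable (fun ω => f ω ^ 2) μ :=
  .of_bound (hf.pow 2) (C ^ 2) (ae_of_all _ fun ω => by
    rw [Real.norm_eq_abs, abs_pow]; exact pow_le_pow_left₀ (abs_nonneg _) (hC ω) 2)

lemma integral_sq_sub_le_of_abs_le_one {f g : α → ℝ} (hf : AEStronglyMeasurable f μ)
    (hg : AEStronglyMeasurable g μ) {C : ℝ} (hfC : ∀ ω, |f ω| ≤ C) (hg1 : ∀ ω, |g ω| ≤ 1) :
    ∫ ω, (f ω - g ω) ^ 2 ∂μ ≤ 2 * ∫ ω, f ω ^ 2 ∂μ + 2 * μ.real univ := by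
  have hf2 := integrable_sq_of_abs_le hf hfC
  have hpt : ∀ ω, (f ω - g ω) ^ 2 ≤ 2 * f ω ^ 2 + 2 := fun ω => by
    have := (sq_le_one_iff_abs_le_one (g ω)).2 (hg1 ω)
    nlinarith [sq_nonneg (f ω + g ω)]
  calc ∫ ω, (f ω - g ω) ^ 2 ∂μ ≤ ∫ ω, 2 * f ω ^ 2 + 2 ∂μ :=
        integral_mono (integrable_sq_of_abs_le (hf.sub hg) fun ω =>
            (abs_sub _ _).trans (add_le_add (hfC ω) (hg1 ω)))
          ((hf2.const_mul 2).add (integrable_const 2)) hpt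
    _ = 2 * ∫ ω, f ω ^ 2 ∂μ + 2 * μ.real univ := by
        rw [integral_add (hf2.const_mul 2) (integrable_const 2), integral_const_mul,
          integral_const, smul_eq_mul]
        ring

lemma tendstoInMeasure_of_tendsto_integral_sq_sub {f : ℕ → α → ℝ} {g : α → ℝ}
    (hint : ∀ n, Integrable (fun ω => (f n ω - g ω) ^ 2) μ)
    (hlim : Tendsto (fun n => ∫ ω, (f n ω - g ω) ^ 2 ∂μ) atTop (𝓝 0)) :
    TendstoInMeasure μ f atTop g := by
  rw [tendstoInMeasure_iff_measureReal_dist]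
  intro ε hε
  have hchebyshev : ∀ n, μ.real {ω | ε ≤ dist (f n ω) (g ω)}
      ≤ (∫ ω, (f n ω - g ω) ^ 2 ∂μ) / ε ^ 2 := by
    intro n
    have hset : {ω | ε ≤ dist (f n ω) (g ω)} = {ω | ε ^ 2 ≤ (f n ω - g ω) ^ 2} := by
      ext ω
      rw [mem_ofPred_eq, mem_ofPred_eq, Real.dist_eq, ← sq_abs (f n ω - g ω),
        pow_le_pow_iff_left₀ hε.le (abs_nonneg _) two_ne_zero]
    rw [hset, le_div_iff₀ (by positivity), mul_comm]
    exact mul_meas_ge_le_integral_of_nonneg (ae_of_all _ fun ω => sq_nonneg _) (hint n) _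
  refine squeeze_zero (fun n => measureReal_nonneg) hchebyshev ?_
  simpa using hlim.div_const (ε ^ 2)

lemma TendstoInMeasure.comp_of_ae_continuousAt {E F : Type*} [PseudoEMetricSpace E]
    [PseudoEMetricSpace F] {f : ℕ → α → E} {g : α → E} {φ : E → F}
    (hfg : TendstoInMeasure μ f atTop g)
    (hφf : ∀ n, AEStronglyMeasurable (fun ω => φ (f n ω)) μ)
    (hφ : ∀ᵐ ω ∂μ, ContinuousAt φ (g ω)) :
    TendstoInMeasure μ (fun n ω => φ (f n ω)) atTop (fun ω => φ (g ω)) := by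
  rw [exists_seq_tendstoInMeasure_atTop_iff hφf]
  intro ns hns
  obtain ⟨ns', hns', hae⟩ := (hfg.comp hns.tendsto_atTop).exists_seq_tendsto_ae
  exact ⟨ns', hns', by filter_upwards [hae, hφ] with ω hω hφω using hφω.tendsto.comp hω⟩

end MeasureTheory

namespace ProbabilityTheory

section CDF

variable {ν : Measure ℝ} [IsProbabilityMeasure ν]

lemma measure_setOf_cdf_eq_zero (hc : Continuous (cdf ν)) : ν {t | cdf ν t = 0} = 0 := by
  set A := {t | cdf ν t = 0}
  obtain ⟨t₀, ht₀⟩ := eventually_atTop.1 ((tendsto_cdf_atTop ν).eventually (lt_mem_nhds one_pos))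
  have hbdd : BddAbove A :=
    ⟨t₀, fun t (ht : cdf ν t = 0) => not_lt.1 fun h => (ht₀ t h.le).ne' ht⟩
  rcases A.eq_empty_or_nonempty with hA | hA
  · rw [hA, measure_empty]
  have hsup : cdf ν (sSup A) = 0 := (isClosed_eq hc continuous_const).csSup_mem hA hbdd
  have hIic : ν (Iic (sSup A)) = 0 := by rw [← ofReal_cdf, hsup, ENNReal.ofReal_zero]
  exact measure_mono_null (fun t ht => le_csSup hbdd ht) hIic

lemma measure_setOf_cdf_eq_one (hc : Continuous (cdf ν)) : ν {t | cdf ν t = 1} = 0 := by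
  set B := {t | cdf ν t = 1}
  obtain ⟨t₀, ht₀⟩ := eventually_atBot.1 ((tendsto_cdf_atBot ν).eventually (gt_mem_nhds one_pos))
  have hbdd : BddBelow B :=
    ⟨t₀, fun t (ht : cdf ν t = 1) => not_lt.1 fun h => (ht₀ t h.le).ne ht⟩
  rcases B.eq_empty_or_nonempty with hB | hB
  · rw [hB, measure_empty]
  have hinf : cdf ν (sInf B) = 1 := (isClosed_eq hc continuous_const).csInf_mem hB hbdd
  have hIci := (cdf ν).measure_Ici (tendsto_cdf_atTop ν) (sInf B)
  rw [measure_cdf, hc.continuousAt.continuousWithinAt.leftLim_eq, hinf, sub_self,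
    ENNReal.ofReal_zero] at hIci
  exact measure_mono_null (fun t ht => csInf_le hbdd ht) hIci

lemma ae_cdf_mem_Ioo (hc : Continuous (cdf ν)) : ∀ᵐ t ∂ν, cdf ν t ∈ Ioo 0 1 := by
  filter_upwards [measure_eq_zero_iff_ae_notMem.1 (measure_setOf_cdf_eq_zero hc),
    measure_eq_zero_iff_ae_notMem.1 (measure_setOf_cdf_eq_one hc)] with t h0 h1
  exact ⟨(cdf_nonneg ν t).lt_of_ne' h0, (cdf_le_one ν t).lt_of_ne h1⟩

end CDF

section Orthogonality

variable {Ω : Type*} [MeasurableSpace Ω] {P : Measure Ω}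

lemma IndepFun.integral_comp_prodMk_eq_zero [IsFiniteMeasure P] {β γ : Type*} [MeasurableSpace β]
    [MeasurableSpace γ] {Y : Ω → β} {X : Ω → γ} (hYX : IndepFun Y X P)
    (hY : Measurable Y) (hX : Measurable X) {φ : β × γ → ℝ}
    (hφ : Integrable φ ((P.map Y).prod (P.map X)))
    (hφ0 : ∀ y, ∫ a, φ (y, a) ∂(P.map X) = 0) :
    ∫ ω, φ (Y ω, X ω) ∂P = 0 := by
  have hmap := (indepFun_iff_map_prod_eq_prod_map_map hY.aemeasurable hX.aemeasurable).1 hYX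
  rw [← integral_map (hY.prodMk hX).aemeasurable (hmap ▸ hφ.aestronglyMeasurable), hmap,
    integral_prod _ hφ]
  simp [hφ0]

lemma integral_sq_sum_le_card [IsProbabilityMeasure P] {ι : Type*} {Z : ι → Ω → ℝ} (s : Finset ι)
    (hZ : ∀ j, AEStronglyMeasurable (Z j) P) (hbd : ∀ j ω, |Z j ω| ≤ 1)
    (horth : ∀ j ∈ s, ∀ k ∈ s, j ≠ k → ∫ ω, Z j ω * Z k ω ∂P = 0) :
    ∫ ω, (∑ j ∈ s, Z j ω) ^ 2 ∂P ≤ s.card := by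
  have hint : ∀ j k, Integrable (fun ω => Z j ω * Z k ω) P := fun j k =>
    .of_bound ((hZ j).mul (hZ k)) 1 (ae_of_all _ fun ω => by
      rw [Real.norm_eq_abs, abs_mul]; exact mul_le_one₀ (hbd j ω) (abs_nonneg _) (hbd k ω))
  have hdiag : ∀ j, ∫ ω, Z j ω * Z j ω ∂P ≤ 1 := fun j => by
    calc ∫ ω, Z j ω * Z j ω ∂P ≤ ∫ _, (1 : ℝ) ∂P :=
          integral_mono (hint j j) (integrable_const _) fun ω => by
            rw [← abs_mul_self, abs_mul]; exact mul_le_one₀ (hbd j ω) (abs_nonneg _) (hbd j ω)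
      _ = 1 := by simp
  simp_rw [sq, Finset.sum_mul_sum]
  rw [integral_finsetSum _ fun j _ => integrable_finsetSum _ fun k _ => hint j k]
  calc ∑ j ∈ s, ∫ ω, ∑ k ∈ s, Z j ω * Z k ω ∂P
      = ∑ j ∈ s, ∫ ω, Z j ω * Z j ω ∂P := Finset.sum_congr rfl fun j hj => by
        rw [integral_finsetSum _ fun k _ => hint j k]
        exact Finset.sum_eq_single_of_mem j hj fun k hk hkj => horth j hj k hk (Ne.symm hkj)
    _ ≤ ∑ _j ∈ s, (1 : ℝ) := Finset.sum_le_sum fun j _ => hdiag j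
    _ = s.card := by simp

end Orthogonality

noncomputable def centredStep (ν : Measure ℝ) (a t : ℝ) : ℝ :=
  (if a ≤ t then 1 else 0) - cdf ν t

section CentredStep

variable {ν : Measure ℝ}

lemma measurable_centredStep : Measurable fun p : ℝ × ℝ => centredStep ν p.1 p.2 :=
  (Measurable.ite (measurableSet_le measurable_fst measurable_snd) measurable_const
    measurable_const).sub ((cdf ν).mono.measurable.comp measurable_snd)

lemma abs_centredStep_le_one (a t : ℝ) : |centredStep ν a t| ≤ 1 := by
  have := cdf_nonneg ν t
  have := cdf_le_one ν t
  unfold centredStep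
  split_ifs <;> rw [abs_le] <;> constructor <;> linarith

variable [IsProbabilityMeasure ν]

lemma integral_centredStep (t : ℝ) : ∫ a, centredStep ν a t ∂ν = 0 := by
  have hind : (fun a : ℝ => if a ≤ t then (1 : ℝ) else 0) = (Iic t).indicator 1 := by
    ext a; simp [indicator_apply]
  have hint : Integrable (fun a : ℝ => if a ≤ t then (1 : ℝ) else 0) ν := by
    rw [hind]; exact (integrable_const 1).indicator measurableSet_Iic
  unfold centredStep
  rw [integral_sub hint (integrable_const _), hind, integral_indicator_one measurableSet_Iic,
    integral_const, cdf_eq_real]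
  simp

variable {Ω : Type*} [MeasurableSpace Ω] {P : Measure Ω} [IsProbabilityMeasure P]
  {x : ℕ → Ω → ℝ}

lemma integral_centredStep_mul_eq_zero (hmeas : ∀ i, Measurable (x i))
    (hindep : iIndepFun x P) (hid : ∀ i, P.map (x i) = ν) {j k l : ℕ} (hjk : j ≠ k) :
    ∫ ω, centredStep ν (x j ω) (x l ω) * centredStep ν (x k ω) (x l ω) ∂P = 0 := by
  -- One of `x j, x k` differs from `x l`, is independent of the other two variables, and
  -- averaging over it kills its factor.
  wlog hkl : k ≠ l generalizing j k
  · rw [not_ne_iff.1 hkl] at hjk ⊢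
    simpa only [mul_comm] using this hjk.symm hjk
  set φ : (ℝ × ℝ) × ℝ → ℝ := fun q => centredStep ν q.1.1 q.1.2 * centredStep ν q.2 q.1.2
  have hφ : Measurable φ :=
    (measurable_centredStep.comp measurable_fst).mul
      (measurable_centredStep.comp (measurable_snd.prodMk measurable_fst.snd))
  refine (hindep.indepFun_prodMk hmeas j l k hjk hkl.symm).integral_comp_prodMk_eq_zero
    ((hmeas j).prodMk (hmeas l)) (hmeas k) (φ := φ)
    (.of_bound hφ.aestronglyMeasurable 1 (ae_of_all _ fun q => ?_)) fun y => ?_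
  · rw [Real.norm_eq_abs, abs_mul]
    exact mul_le_one₀ (abs_centredStep_le_one _ _) (abs_nonneg _) (abs_centredStep_le_one _ _)
  · show ∫ a, centredStep ν y.1 y.2 * centredStep ν a y.2 ∂P.map (x k) = 0
    rw [hid k, integral_const_mul, integral_centredStep, mul_zero]

lemma integral_sq_sum_centredStep_le (hmeas : ∀ i, Measurable (x i))
    (hindep : iIndepFun x P) (hid : ∀ i, P.map (x i) = ν) (l : ℕ) (s : Finset ℕ) :
    ∫ ω, (∑ j ∈ s, centredStep ν (x j ω) (x l ω)) ^ 2 ∂P ≤ s.card :=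
  integral_sq_sum_le_card s
    (fun j => (measurable_centredStep.comp ((hmeas j).prodMk (hmeas l))).aestronglyMeasurable)
    (fun _ _ => abs_centredStep_le_one _ _)
    fun _ _ _ _ hjk => integral_centredStep_mul_eq_zero hmeas hindep hid hjk

end CentredStep

section Rank

variable {Ω : Type*} {x : ℕ → Ω → ℝ}

noncomputable def rankAmong (x : ℕ → Ω → ℝ) (L l : ℕ) (ω : Ω) : ℕ :=
  ((Finset.range L).filter fun j => x j ω ≤ x l ω).card

lemma rankAmong_le (L l : ℕ) (ω : Ω) : rankAmong x L l ω ≤ L :=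
  (Finset.card_filter_le _ _).trans (Finset.card_range L).le

lemma rankAmong_div_sub_cdf (ν : Measure ℝ) (L l : ℕ) (ω : Ω) :
    (rankAmong x L l ω : ℝ) / (L + 1) - cdf ν (x l ω)
      = (∑ j ∈ Finset.range L, centredStep ν (x j ω) (x l ω) - cdf ν (x l ω)) / (L + 1) := by
  have hsum : ∑ j ∈ Finset.range L, centredStep ν (x j ω) (x l ω)
      = rankAmong x L l ω - L * cdf ν (x l ω) := by
    rw [rankAmong, Finset.card_filter]
    push_cast
    simp [centredStep, Finset.sum_sub_distrib]
  rw [hsum]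
  field_simp
  ring

variable [MeasurableSpace Ω]

lemma measurable_rankAmong (hmeas : ∀ i, Measurable (x i)) (L l : ℕ) :
    Measurable (rankAmong x L l) := by
  unfold rankAmong
  simp_rw [Finset.card_filter]
  exact Finset.measurable_sum _ fun j _ =>
    Measurable.ite (measurableSet_le (hmeas j) (hmeas l)) measurable_const measurable_const

variable {P : Measure Ω} [IsProbabilityMeasure P] {ν : Measure ℝ} [IsProbabilityMeasure ν]

lemma integral_sq_rankAmong_div_sub_cdf_le (hmeas : ∀ i, Measurable (x i))
    (hindep : iIndepFun x P) (hid : ∀ i, P.map (x i) = ν) (L l : ℕ) :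
    ∫ ω, ((rankAmong x L l ω : ℝ) / (L + 1) - cdf ν (x l ω)) ^ 2 ∂P ≤ 2 / ((L : ℝ) + 1) := by
  set S : Ω → ℝ := fun ω => ∑ j ∈ Finset.range L, centredStep ν (x j ω) (x l ω)
  have hS : Measurable S := Finset.measurable_sum _ fun j _ =>
    measurable_centredStep.comp ((hmeas j).prodMk (hmeas l))
  have hSbd : ∀ ω, |S ω| ≤ L := fun ω =>
    (Finset.abs_sum_le_sum_abs _ _).trans (by
      simpa using Finset.sum_le_sum fun j (_ : j ∈ Finset.range L) =>
        abs_centredStep_le_one (ν := ν) (x j ω) (x l ω))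
  have hSU : ∫ ω, (S ω - cdf ν (x l ω)) ^ 2 ∂P ≤ 2 * L + 2 := by
    have hS2 := integral_sq_sum_centredStep_le hmeas hindep hid l (Finset.range L)
    have hU : ∀ ω, |cdf ν (x l ω)| ≤ 1 := fun ω =>
      abs_le.2 ⟨by linarith [cdf_nonneg ν (x l ω)], cdf_le_one ν (x l ω)⟩
    have hSU2 : ∫ ω, (S ω - cdf ν (x l ω)) ^ 2 ∂P ≤ 2 * ∫ ω, S ω ^ 2 ∂P + 2 * P.real univ :=
      integral_sq_sub_le_of_abs_le_one hS.aestronglyMeasurable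
        ((cdf ν).mono.measurable.comp (hmeas l)).aestronglyMeasurable hSbd hU
    rw [probReal_univ] at hSU2
    rw [Finset.card_range] at hS2
    linarith
  calc ∫ ω, ((rankAmong x L l ω : ℝ) / (L + 1) - cdf ν (x l ω)) ^ 2 ∂P
      = (∫ ω, (S ω - cdf ν (x l ω)) ^ 2 ∂P) / ((L : ℝ) + 1) ^ 2 := by
        rw [← integral_div]
        simp only [S, rankAmong_div_sub_cdf, div_pow]
    _ ≤ (2 * L + 2) / ((L : ℝ) + 1) ^ 2 := by gcongr
    _ = 2 / (L + 1) := by field_simp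

lemma tendstoInMeasure_rankAmong_div (hmeas : ∀ i, Measurable (x i))
    (hindep : iIndepFun x P) (hid : ∀ i, P.map (x i) = ν) (l : ℕ) :
    TendstoInMeasure P (fun L ω => (rankAmong x L l ω : ℝ) / (L + 1)) atTop
      (fun ω => cdf ν (x l ω)) := by
  refine tendstoInMeasure_of_tendsto_integral_sq_sub (fun L => ?_) ?_
  · have hR : Measurable fun ω => (rankAmong x L l ω : ℝ) / (L + 1) :=
      (measurable_from_nat (f := fun n : ℕ => (n : ℝ) / (L + 1))).comp
        (measurable_rankAmong hmeas L l)
    refine integrable_sq_of_abs_le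
      (hR.sub ((cdf ν).mono.measurable.comp (hmeas l))).aestronglyMeasurable fun ω =>
        abs_sub_le_of_nonneg_of_le (by positivity) ?_ (cdf_nonneg ν _) (cdf_le_one ν _)
    rw [div_le_one (by positivity)]
    exact_mod_cast (rankAmong_le L l ω).trans L.le_succ
  · refine squeeze_zero (fun L => integral_nonneg fun ω => sq_nonneg _)
      (integral_sq_rankAmong_div_sub_cdf_le hmeas hindep hid · l) ?_
    simpa only [mul_one_div, mul_zero] using
      tendsto_one_div_add_atTop_nhds_zero_nat.const_mul (2 : ℝ)

end Rank

end ProbabilityTheory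

theorem rank_score_approx_inProbability_general
    {Ω : Type*} [MeasurableSpace Ω] (P : Measure Ω) [IsProbabilityMeasure P]
    (x : ℕ → Ω → ℝ)
    (hmeas : ∀ i, Measurable (x i))
    (hindep : iIndepFun x P)
    (ν : Measure ℝ) [IsProbabilityMeasure ν]
    (hid : ∀ i, P.map (x i) = ν)
    (F : ℝ → ℝ) (hF : ∀ t, F t = (ν (Set.Iic t)).toReal) (hFcont : Continuous F)
    (K : ℝ → ℝ)
    (hKcont : ContinuousOn K (Set.Ioo 0 1))
    (l : ℕ) :
    ∀ ε : ℝ, 0 < ε →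
      Tendsto (fun L : ℕ =>
          P {ω | ε ≤ |K ((((Finset.range L).filter (fun j => x j ω ≤ x l ω)).card : ℝ)
                        / (L + 1))
                  - K (F (x l ω))|})
        atTop (𝓝 0) := by
  obtain rfl : F = cdf ν := funext fun t => by rw [hF, cdf_eq_real, measureReal_def]
  have hU : ∀ᵐ ω ∂P, cdf ν (x l ω) ∈ Ioo 0 1 :=
    ae_of_ae_map (hmeas l).aemeasurable (by rw [hid l]; exact ae_cdf_mem_Ioo hFcont)
  have hKU : ∀ᵐ ω ∂P, ContinuousAt K (cdf ν (x l ω)) :=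
    hU.mono fun ω hω => hKcont.continuousAt (isOpen_Ioo.mem_nhds hω)
  have hKR : ∀ L, AEStronglyMeasurable (fun ω => K ((rankAmong x L l ω : ℝ) / (L + 1))) P :=
    fun L => ((measurable_from_nat (f := fun n : ℕ => K ((n : ℝ) / (L + 1)))).comp
      (measurable_rankAmong hmeas L l)).aestronglyMeasurable
  have h := (tendstoInMeasure_rankAmong_div hmeas hindep hid l).comp_of_ae_continuousAt hKR hKU
  intro ε hε
  exact tendstoInMeasure_iff_dist.1 h ε hε

/-- Let `K : (0,1) → ℝ⁺` be continuous, square integrable and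
expressible on `(0,1)` as the difference of two monotone increasing functions.
Let `x 0, x 1, …` be i.i.d. real random variables with continuous cdf `F`
(the cdf of the common law `ν`), let `r_l^{(L)}` be the rank of `x l` among
`x 0, …, x (L-1)` (the number of `j < L` with `x j ≤ x l`), and let
`u_l = F (x l)` be the probability integral transform.  Then for each fixed `l`,
`K (r_l^{(L)} / (L+1)) - K (u_l)` converges to `0` in probability as `L → ∞`. -/
theorem rank_score_approx_inProbability
    {Ω : Type*} [MeasurableSpace Ω] (P : Measure Ω) [IsProbabilityMeasure P]
    (x : ℕ → Ω → ℝ)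
    (hmeas : ∀ i, Measurable (x i))
    (hindep : iIndepFun x P)
    (ν : Measure ℝ) [IsProbabilityMeasure ν]
    (hid : ∀ i, P.map (x i) = ν)
    (F : ℝ → ℝ) (hF : ∀ t, F t = (ν (Set.Iic t)).toReal) (hFcont : Continuous F)
    (K K₁ K₂ : ℝ → ℝ)
    (hKpos : ∀ u ∈ Set.Ioo (0:ℝ) 1, 0 < K u)
    (hKcont : ContinuousOn K (Set.Ioo 0 1))
    (hKsq : IntegrableOn (fun u => (K u) ^ 2) (Set.Ioo 0 1))
    (hKdiff : ∀ u ∈ Set.Ioo (0:ℝ) 1, K u = K₁ u - K₂ u)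
    (hK₁ : MonotoneOn K₁ (Set.Ioo 0 1)) (hK₂ : MonotoneOn K₂ (Set.Ioo 0 1))
    (l : ℕ) :
    ∀ ε : ℝ, 0 < ε →
      Tendsto (fun L : ℕ =>
          P {ω | ε ≤ |K ((((Finset.range L).filter (fun j => x j ω ≤ x l ω)).card : ℝ)
                        / (L + 1))
                  - K (F (x l ω))|})
        atTop (𝓝 0) :=
  rank_score_approx_inProbability_general P x hmeas hindep ν hid F hF hFcont K hKcont l
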